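/- arXiv:1311.4476 — 4 statements merged into one kernel-verified Lean document; each statement's English description precedes it below -/
import Mathlib

section
/- Let C_n denote the cycle of length n. Then γ_R(C_n) = 2k+1 if n = 3k+1 and γ_R(C_n) = 2k+2 if n = 3k+2, and C_n is v-critical if and only if n ≡ 1 or 2 (mod 3). -/
open SimpleGraph

/-- A Roman domination function on `G`. -/
def IsRomanFn {V : Type*} (G : SimpleGraph V) (r : V → Fin 3) : Prop :=
  ∀ u, r u = 0 → ∃ v, G.Adj u v ∧ r v = 2

/-- The weight of a Roman domination function. -/
noncomputable def romanWeight {V : Type*} [Fintype V] (r : V → Fin 3) : ℕ :=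
  ∑ u, (r u : ℕ)

/-- The Roman domination number of `G`. -/
noncomputable def romanNumber {V : Type*} [Fintype V] (G : SimpleGraph V) : ℕ :=
  sInf {w | ∃ r : V → Fin 3, IsRomanFn G r ∧ romanWeight r = w}

/-- `G` is vertex critical. -/
def VCritical {V : Type*} [Fintype V] [DecidableEq V] (G : SimpleGraph V) : Prop :=
  ∀ v : V, romanNumber (G.induce {u | u ≠ v}) = romanNumber G - 1

/-- `G` is edge critical. -/
def ECritical {V : Type*} [Fintype V] [DecidableEq V] (G : SimpleGraph V) : Prop :=
  VCritical G ∧ ∀ e ∈ G.edgeSet, ¬ VCritical (G.deleteEdges {e})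

/-- `G` is Roman saturated. -/
def RomanSaturated {V : Type*} [Fintype V] (G : SimpleGraph V) : Prop :=
  ∀ v w : V, v ≠ w → ¬ G.Adj v w →
    romanNumber (G ⊔ SimpleGraph.fromEdgeSet {s(v, w)}) = romanNumber G - 1

/-- `v` is a cut vertex of `G`. -/
def IsCutVertex {V : Type*} [Fintype V] [DecidableEq V] (G : SimpleGraph V) (v : V) : Prop :=
  Nat.card G.ConnectedComponent < Nat.card (G.induce {u | u ≠ v}).ConnectedComponent


/-!
Every vertex of a cycle, or of a path obtained by deleting one of its vertices, has at most two
neighbours, so a vertex labelled `2` covers at most two vertices labelled `0`; counting gives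
`2 |V| ≤ 3 w` for every Roman function of weight `w`. Labelling `C_n` by blocks `0 2 0` followed
by `n % 3` vertices labelled `1` attains this bound, so `γ_R(C_n) = 2 ⌊n/3⌋ + n % 3`.
If `3 ∤ n` this labelling has a vertex labelled `1`; rotating it onto `v` and dropping `v` gives
`γ_R(C_n - v) ≤ γ_R(C_n) - 1`, and the counting bound on `C_n - v` gives equality.
If `3 ∣ n` the counting bound gives `γ_R(C_n - v) ≥ 2n/3 = γ_R(C_n)`.
-/

open Finset

section General

variable {V : Type*} [Fintype V] (G : SimpleGraph V)

theorem romanNumber_le_romanWeight {r : V → Fin 3} (hr : IsRomanFn G r) :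
    romanNumber G ≤ romanWeight r :=
  Nat.sInf_le ⟨r, hr, rfl⟩

theorem exists_romanWeight_eq_romanNumber :
    ∃ r : V → Fin 3, IsRomanFn G r ∧ romanWeight r = romanNumber G := by
  have hone : IsRomanFn G fun _ => 1 := fun _ h => absurd h one_ne_zero
  exact Nat.sInf_mem (s := {w | ∃ r : V → Fin 3, IsRomanFn G r ∧ romanWeight r = w})
    ⟨_, _, hone, rfl⟩

/-- Each vertex labelled `2` dominates at most `Δ` vertices labelled `0`. -/
theorem two_mul_card_le_mul_romanWeight [DecidableRel G.Adj] {Δ : ℕ} (hΔ : 1 ≤ Δ)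
    (hG : ∀ v, G.degree v ≤ Δ) {r : V → Fin 3} (hr : IsRomanFn G r) :
    2 * Fintype.card V ≤ (Δ + 1) * romanWeight r := by
  classical
  have hzero : #{u | r u = 0} ≤ #{u | r u = 2} * Δ := by
    refine (card_le_card fun u hu => ?_).trans
      (card_biUnion_le_card_mul _ (fun v => G.neighborFinset v) Δ fun v _ => hG v)
    obtain ⟨v, huv, hv⟩ := hr u (mem_filter.1 hu).2
    exact mem_biUnion.2
      ⟨v, mem_filter.2 ⟨mem_univ v, hv⟩, (G.mem_neighborFinset v u).2 huv.symm⟩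
  have hcard : Fintype.card V = #{u | r u = 0} + #{u | r u = 1} + #{u | r u = 2} := by
    rw [← card_univ, card_eq_sum_card_fiberwise (f := r) (t := univ) (fun _ _ => mem_univ _),
      Fin.sum_univ_three]
  have hweight : romanWeight r = #{u | r u = 1} + 2 * #{u | r u = 2} := by
    rw [romanWeight, ← sum_fiberwise' univ r (fun j : Fin 3 => (j : ℕ)), Fin.sum_univ_three]
    simp [mul_comm]
  rw [hcard, hweight]
  nlinarith

theorem two_mul_card_le_mul_romanNumber [DecidableRel G.Adj] {Δ : ℕ} (hΔ : 1 ≤ Δ)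
    (hG : ∀ v, G.degree v ≤ Δ) : 2 * Fintype.card V ≤ (Δ + 1) * romanNumber G := by
  obtain ⟨r, hr, hw⟩ := exists_romanWeight_eq_romanNumber G
  exact hw ▸ two_mul_card_le_mul_romanWeight G hΔ hG hr

theorem degree_induce_le [DecidableRel G.Adj] (s : Set V) [DecidablePred (· ∈ s)] (v : s) :
    (G.induce s).degree v ≤ G.degree v := by
  classical
  rw [← card_neighborFinset_eq_degree, ← card_map (.subtype (· ∈ s)),
    map_neighborFinset_induce]
  exact card_le_card inter_subset_left

theorem romanNumber_induce_ne_add_one_le [DecidableEq V] {r : V → Fin 3} (hr : IsRomanFn G r)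
    {v : V} (hv : r v = 1) : romanNumber (G.induce {u | u ≠ v}) + 1 ≤ romanWeight r := by
  have hres : IsRomanFn (G.induce {u | u ≠ v}) (fun u => r u) := by
    intro u hu
    obtain ⟨w, huw, hw⟩ := hr u hu
    have hwv : w ≠ v := by rintro rfl; simp [hv] at hw
    exact ⟨⟨w, hwv⟩, huw, hw⟩
  have hweight : romanWeight r = r v + romanWeight (fun u : {u | u ≠ v} => r u) :=
    Fintype.sum_eq_add_sum_subtype_ne _ v
  have := romanNumber_le_romanWeight _ hres
  rw [hweight, hv, Fin.val_one]
  omega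

end General

section Iso

variable {V W : Type*} {G : SimpleGraph V} {H : SimpleGraph W}

theorem IsRomanFn.comp_iso (φ : G ≃g H) {r : W → Fin 3} (hr : IsRomanFn H r) :
    IsRomanFn G (r ∘ φ) := by
  intro u hu
  obtain ⟨w, huw, hw⟩ := hr (φ u) hu
  exact ⟨φ.symm w, by rwa [← φ.map_adj_iff, φ.apply_symm_apply], by simpa using hw⟩

theorem romanWeight_comp_iso [Fintype V] [Fintype W] (φ : G ≃g H) (r : W → Fin 3) :
    romanWeight (r ∘ φ) = romanWeight r :=
  φ.toEquiv.sum_comp fun w => (r w : ℕ)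

end Iso

section Cycle

variable {n : ℕ}

theorem cycleGraph_adj_of_val_add_one {u v : Fin n} (h : u.val + 1 = v.val) :
    (cycleGraph n).Adj u v :=
  cycleGraph_adj'.2 <| .inr <| by
    rw [Fin.coe_sub_iff_le.2 (Fin.le_iff_val_le_val.2 (by omega))]
    omega

theorem cycleGraph_degree_le_two (v : Fin n) : (cycleGraph n).degree v ≤ 2 := by
  rcases n with _ | _ | n
  · exact v.elim0
  · exact (degree_lt_card_verts v).le.trans (by simp)
  · exact cycleGraph_degree_two_le ▸ card_le_two

def cycleGraphRotation [NeZero n] (c : Fin n) : cycleGraph n ≃g cycleGraph n where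
  toEquiv := Equiv.addRight c
  map_rel_iff' := by simp [cycleGraph_adj']

def cycleRomanFn (n : ℕ) (u : Fin n) : Fin 3 :=
  if u.val < 3 * (n / 3) then if u.val % 3 = 1 then 2 else 0 else 1

theorem isRomanFn_cycleRomanFn : IsRomanFn (cycleGraph n) (cycleRomanFn n) := by
  intro u hu
  have hu_lt := u.isLt
  unfold cycleRomanFn at hu
  split_ifs at hu with hblock hmod
  · exact absurd hu (by decide)
  · rcases (by omega : u.val % 3 = 0 ∨ u.val % 3 = 2) with h0 | h2
    · refine ⟨⟨u + 1, by omega⟩, cycleGraph_adj_of_val_add_one rfl, ?_⟩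
      rw [cycleRomanFn, Fin.val_mk, if_pos (by omega), if_pos (by omega)]
    · have hpred : (u.val - 1) + 1 = u.val := by omega
      refine ⟨⟨u - 1, by omega⟩, (cycleGraph_adj_of_val_add_one hpred).symm, ?_⟩
      rw [cycleRomanFn, Fin.val_mk, if_pos (by omega), if_pos (by omega)]
  · exact absurd hu (by decide)

theorem sum_range_three_mul_ite_mod_three_eq_one (k : ℕ) :
    ∑ p ∈ range (3 * k), (if p % 3 = 1 then 2 else 0) = 2 * k := by
  induction k with
  | zero => simp
  | succ k ih =>
    rw [Nat.mul_succ, sum_range_succ, sum_range_succ, sum_range_succ, ih]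
    split_ifs <;> omega

theorem romanWeight_cycleRomanFn : romanWeight (cycleRomanFn n) = 2 * (n / 3) + n % 3 := by
  have hval : ∀ u : Fin n, (cycleRomanFn n u : ℕ) =
      if u.val < 3 * (n / 3) then if u.val % 3 = 1 then 2 else 0 else 1 := by
    intro u
    unfold cycleRomanFn
    split_ifs <;> rfl
  have hsum : ∀ k j, ∑ p ∈ range (3 * k + j),
      (if p < 3 * k then if p % 3 = 1 then 2 else 0 else 1) = 2 * k + j := by
    intro k j
    rw [sum_range_add, ← sum_range_three_mul_ite_mod_three_eq_one k]
    congr 1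
    · exact sum_congr rfl fun p hp => if_pos (mem_range.1 hp)
    · simp
  rw [romanWeight, Fintype.sum_congr _ _ hval, Fin.sum_univ_eq_sum_range
    (fun p => if p < 3 * (n / 3) then if p % 3 = 1 then 2 else 0 else 1), ← hsum,
    Nat.div_add_mod]

theorem romanNumber_cycleGraph_eq : romanNumber (cycleGraph n) = 2 * (n / 3) + n % 3 := by
  have hlower :=
    two_mul_card_le_mul_romanNumber (cycleGraph n) one_le_two cycleGraph_degree_le_two
  have hupper := romanNumber_le_romanWeight _ (isRomanFn_cycleRomanFn (n := n))
  rw [Fintype.card_fin] at hlower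
  rw [romanWeight_cycleRomanFn] at hupper
  omega

theorem two_mul_le_three_mul_romanNumber_cycleGraph_induce_ne (x : Fin n) :
    2 * (n - 1) ≤ 3 * romanNumber ((cycleGraph n).induce {u | u ≠ x}) := by
  have h := two_mul_card_le_mul_romanNumber ((cycleGraph n).induce {u | u ≠ x}) one_le_two
    fun v => (degree_induce_le _ _ v).trans (cycleGraph_degree_le_two v.1)
  rwa [Set.card_ne_eq, Fintype.card_fin] at h

theorem romanNumber_cycleGraph_induce_ne_add_one_le [NeZero n] (hn : n % 3 ≠ 0) (x : Fin n) :
    romanNumber ((cycleGraph n).induce {u | u ≠ x}) + 1 ≤ 2 * (n / 3) + n % 3 := by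
  let last : Fin n := ⟨n - 1, by have := NeZero.pos n; omega⟩
  have hx : (cycleRomanFn n ∘ cycleGraphRotation (last - x)) x = 1 := by
    change cycleRomanFn n (x + (last - x)) = 1
    rw [add_sub_cancel, cycleRomanFn, if_neg (by simp only [last]; omega)]
  have := romanNumber_induce_ne_add_one_le _
    (isRomanFn_cycleRomanFn.comp_iso (cycleGraphRotation (last - x))) hx
  rwa [romanWeight_comp_iso, romanWeight_cycleRomanFn] at this

end Cycle

/-- γ_R(C_{3k+1}) = 2k+1, γ_R(C_{3k+2}) = 2k+2, and C_n is v-critical iff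
n ≡ 1 or 2 (mod 3). -/
theorem romanNumber_cycleGraph (n : ℕ) (hn : 3 ≤ n) :
    (∀ k : ℕ, n = 3 * k + 1 → romanNumber (SimpleGraph.cycleGraph n) = 2 * k + 1) ∧
    (∀ k : ℕ, n = 3 * k + 2 → romanNumber (SimpleGraph.cycleGraph n) = 2 * k + 2) ∧
    (VCritical (SimpleGraph.cycleGraph n) ↔ n % 3 = 1 ∨ n % 3 = 2) := by
  have : NeZero n := ⟨by omega⟩
  have hcycle : romanNumber (cycleGraph n) = 2 * (n / 3) + n % 3 := romanNumber_cycleGraph_eq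
  refine ⟨fun k hk => by omega, fun k hk => by omega, fun hcrit => ?_, fun hmod x => ?_⟩
  · have hpath := two_mul_le_three_mul_romanNumber_cycleGraph_induce_ne (0 : Fin n)
    rw [hcrit 0] at hpath
    omega
  · have hlower := two_mul_le_three_mul_romanNumber_cycleGraph_induce_ne x
    have hupper := romanNumber_cycleGraph_induce_ne_add_one_le (by omega) x
    omega
end

section
/- A v-critical finite simple graph G is e-critical if and only if for every edge e ∈ E(G) there exists a vertex v_e ∈ V(G) such that for every minimal Roman partition (V_0; V_1; V_2) of G with v_e ∈ V_1, the edge e = [v,w] satisfies v ∈ V_0 and N[v] ∩ V_2 = {w}. -/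
/-!
Let `e = ab` be an edge of a vertex-critical graph `G`. Since `G - e - a = G - a`, and a Roman
function of `G - a` extends to `G - e` by giving `a` the value `1`, we get
`γ_R(G - e) = γ_R(G)`. So `G - e` is vertex-critical iff `γ_R(G - e - x) = γ_R(G - x)` for every
vertex `x`. Minimum Roman functions of `G` with `x ∈ V_1` are exactly those of `G - x` extended by
`1` at `x`, so this says that for every `x` some minimal Roman partition of `G` with `x ∈ V_1` is
still a Roman partition of `G - e`. Finally, a Roman function of `G` is no longer one of `G - vw`
exactly when `v ∈ V_0` and `w` is the only vertex of `N[v]` in `V_2`.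
-/

open SimpleGraph

section RomanOn

variable {V : Type*} {G H : SimpleGraph V} {s : Set V} {r : V → Fin 3}

/-- Roman domination functions of the subgraph induced on `s`, seen as functions on all of `V`
that vanish off `s`. -/
def IsRomanFnOn (G : SimpleGraph V) (s : Set V) (r : V → Fin 3) : Prop :=
  (∀ u ∉ s, r u = 0) ∧ ∀ u ∈ s, r u = 0 → ∃ v, G.Adj u v ∧ r v = 2

noncomputable def romanNumberOn [Fintype V] (G : SimpleGraph V) (s : Set V) : ℕ :=
  sInf {w | ∃ r, IsRomanFnOn G s r ∧ romanWeight r = w}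

lemma IsRomanFnOn.mono (hGH : G ≤ H) (hr : IsRomanFnOn G s r) : IsRomanFnOn H s r :=
  ⟨hr.1, fun u hu h0 => (hr.2 u hu h0).imp fun _ ⟨hadj, h2⟩ => ⟨hGH hadj, h2⟩⟩

lemma isRomanFnOn_univ : IsRomanFnOn G Set.univ r ↔ IsRomanFn G r := by
  simp [IsRomanFnOn, IsRomanFn]

variable [Fintype V]

lemma romanNumberOn_univ : romanNumberOn G Set.univ = romanNumber G := by
  simp only [romanNumberOn, romanNumber, isRomanFnOn_univ]

lemma romanNumberOn_le (hr : IsRomanFnOn G s r) : romanNumberOn G s ≤ romanWeight r :=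
  Nat.sInf_le ⟨r, hr, rfl⟩

lemma exists_romanNumberOn (G : SimpleGraph V) (s : Set V) :
    ∃ r, IsRomanFnOn G s r ∧ romanWeight r = romanNumberOn G s := by
  classical
  have hone : IsRomanFnOn G s fun u => if u ∈ s then 1 else 0 :=
    ⟨fun u hu => by simp [hu], fun u hu h0 => by simp [hu] at h0⟩
  exact Nat.sInf_mem (s := {w | ∃ r, IsRomanFnOn G s r ∧ romanWeight r = w})
    ⟨_, _, hone, rfl⟩

lemma romanNumberOn_eq_iff {k : ℕ} (hk : k ≤ romanNumberOn G s) :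
    romanNumberOn G s = k ↔ ∃ r, IsRomanFnOn G s r ∧ romanWeight r = k := by
  refine ⟨fun h => h ▸ exists_romanNumberOn G s, ?_⟩
  rintro ⟨r, hr, rfl⟩
  exact le_antisymm (romanNumberOn_le hr) hk

lemma romanNumberOn_anti (hGH : G ≤ H) (s : Set V) : romanNumberOn H s ≤ romanNumberOn G s := by
  obtain ⟨r, hr, hw⟩ := exists_romanNumberOn G s
  exact hw ▸ romanNumberOn_le (hr.mono hGH)

lemma romanWeight_eq_sum_subtype (s : Set V) [Fintype s] [DecidablePred (· ∈ s)]
    (hr : ∀ u ∉ s, r u = 0) : romanWeight r = ∑ u : s, (r u : ℕ) := by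
  have hout : ∑ u : {u // u ∉ s}, (r u : ℕ) = 0 :=
    Finset.sum_eq_zero fun u _ => by simp [hr u u.2]
  rw [romanWeight, ← Fintype.sum_subtype_add_sum_subtype (· ∈ s), hout, add_zero]
  convert rfl

lemma romanNumber_induce (G : SimpleGraph V) (s : Set V) [Fintype s] [DecidablePred (· ∈ s)] :
    romanNumber (G.induce s) = romanNumberOn G s := by
  unfold romanNumber romanNumberOn
  congr 1
  ext w
  constructor
  · rintro ⟨r, hr, rfl⟩
    refine ⟨fun u => if h : u ∈ s then r ⟨u, h⟩ else 0,
      ⟨fun u hu => dif_neg hu, fun u hu h0 => ?_⟩, ?_⟩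
    · simp only [dif_pos hu] at h0
      obtain ⟨v, hadj, h2⟩ := hr ⟨u, hu⟩ h0
      exact ⟨v, hadj, by simpa only [dif_pos v.2]⟩
    · rw [romanWeight_eq_sum_subtype s fun u hu => dif_neg hu, romanWeight]
      exact Finset.sum_congr rfl fun u _ => by simp only [dif_pos u.2]
  · rintro ⟨r, hr, rfl⟩
    refine ⟨fun u => r u, fun u h0 => ?_, ?_⟩
    · obtain ⟨v, hadj, h2⟩ := hr.2 u u.2 h0
      have hv : v ∈ s := by_contra fun hv => by simp [hr.1 v hv] at h2
      exact ⟨⟨v, hv⟩, hadj, h2⟩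
    · rw [romanWeight_eq_sum_subtype s hr.1, romanWeight]

lemma one_le_romanNumber (G : SimpleGraph V) (a : V) : 1 ≤ romanNumber G := by
  obtain ⟨r, hr, hw⟩ := exists_romanNumberOn G Set.univ
  rw [romanNumberOn_univ] at hw
  rw [isRomanFnOn_univ] at hr
  have single_le (u : V) : (r u : ℕ) ≤ romanWeight r :=
    Finset.single_le_sum (f := fun u => (r u : ℕ)) (fun _ _ => Nat.zero_le _) (Finset.mem_univ u)
  rw [← hw]
  by_cases h0 : r a = 0
  · obtain ⟨v, -, h2⟩ := hr a h0
    have := single_le v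
    simp only [h2] at this
    omega
  · have := single_le a
    have : (r a : ℕ) ≠ 0 := fun h => h0 (Fin.ext h)
    omega

end RomanOn

section Extension

variable {V : Type*} [Fintype V] [DecidableEq V] {G : SimpleGraph V}

lemma romanWeight_update (r : V → Fin 3) (x : V) (c : Fin 3) :
    romanWeight (Function.update r x c) + r x = romanWeight r + c := by
  simp only [romanWeight, Function.apply_update (fun _ (i : Fin 3) => (i : ℕ)),
    Finset.sum_update_of_mem (Finset.mem_univ x)]
  rw [← Finset.add_sum_erase _ _ (Finset.mem_univ x), Finset.sdiff_singleton_eq_erase]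
  ring

lemma exists_isRomanFn_apply_eq_one_iff (x : V) (k : ℕ) :
    (∃ r, IsRomanFn G r ∧ romanWeight r = k + 1 ∧ r x = 1) ↔
      ∃ r, IsRomanFnOn G {u | u ≠ x} r ∧ romanWeight r = k := by
  constructor
  · rintro ⟨r, hr, hw, hx⟩
    refine ⟨Function.update r x 0, ⟨fun u hu => ?_, fun u hu h0 => ?_⟩, ?_⟩
    · simp_all
    · rw [Function.update_of_ne hu] at h0
      obtain ⟨v, hadj, h2⟩ := hr u h0
      have hv : v ≠ x := by rintro rfl; simp [hx] at h2
      exact ⟨v, hadj, by rwa [Function.update_of_ne hv]⟩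
    · have := romanWeight_update r x 0
      simp only [hx, Fin.val_one, Fin.val_zero] at this
      omega
  · rintro ⟨r, hr, hw⟩
    have hx : r x = 0 := hr.1 x (by simp)
    refine ⟨Function.update r x 1, fun u h0 => ?_, ?_, by simp⟩
    · have hu : u ≠ x := by rintro rfl; simp at h0
      rw [Function.update_of_ne hu] at h0
      obtain ⟨v, hadj, h2⟩ := hr.2 u hu h0
      have hv : v ≠ x := by rintro rfl; simp [hx] at h2
      exact ⟨v, hadj, by rwa [Function.update_of_ne hv]⟩
    · have := romanWeight_update r x 1
      simp only [hx, Fin.val_one, Fin.val_zero] at this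
      omega

lemma romanNumber_le_romanNumberOn_add_one (G : SimpleGraph V) (x : V) :
    romanNumber G ≤ romanNumberOn G {u | u ≠ x} + 1 := by
  obtain ⟨r, hr, hw⟩ :=
    (exists_isRomanFn_apply_eq_one_iff x _).2 (exists_romanNumberOn G {u | u ≠ x})
  rw [← hw.1, ← romanNumberOn_univ]
  exact romanNumberOn_le (isRomanFnOn_univ.2 hr)

end Extension

section DeleteEdge

variable {V : Type*} {G : SimpleGraph V} {s : Set V} {r : V → Fin 3}

lemma isRomanFnOn_deleteEdges_iff {a b : V} (ha : a ∉ s) :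
    IsRomanFnOn (G.deleteEdges {s(a, b)}) s r ↔ IsRomanFnOn G s r := by
  refine ⟨IsRomanFnOn.mono (deleteEdges_le _), fun hr => ⟨hr.1, fun u hu h0 => ?_⟩⟩
  obtain ⟨v, hadj, h2⟩ := hr.2 u hu h0
  have hv : v ∈ s := by_contra fun hv => by simp [hr.1 v hv] at h2
  refine ⟨v, deleteEdges_adj.2 ⟨hadj, fun he => ?_⟩, h2⟩
  rcases Sym2.eq_iff.1 (Set.mem_singleton_iff.1 he) with ⟨rfl, -⟩ | ⟨-, rfl⟩
  exacts [ha hu, ha hv]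

lemma romanNumberOn_deleteEdges [Fintype V] {a b : V} (ha : a ∉ s) :
    romanNumberOn (G.deleteEdges {s(a, b)}) s = romanNumberOn G s := by
  simp only [romanNumberOn, isRomanFnOn_deleteEdges_iff ha]

lemma not_isRomanFn_deleteEdges_iff (hr : IsRomanFn G r) (e : Sym2 V) :
    ¬ IsRomanFn (G.deleteEdges {e}) r ↔ ∃ v w, e = s(v, w) ∧ r v = 0 ∧
      insert v (G.neighborSet v) ∩ {u | r u = 2} = {w} := by
  constructor
  · intro hnot
    simp only [IsRomanFn, deleteEdges_adj, Set.mem_singleton_iff, not_forall, not_exists,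
      not_and] at hnot
    obtain ⟨v, hv0, hno⟩ := hnot
    have hedge : ∀ z, G.Adj v z → r z = 2 → e = s(v, z) := fun z hadj h2 =>
      by_contra fun hne => hno z ⟨hadj, Ne.symm hne⟩ h2
    obtain ⟨w, hadj, h2⟩ := hr v hv0
    refine ⟨v, w, hedge w hadj h2, hv0, Set.ext fun z => ⟨?_, ?_⟩⟩
    · rintro ⟨rfl | hz, hz2⟩
      · simp [hv0] at hz2
      · exact Sym2.congr_right.1 ((hedge z hz hz2).symm.trans (hedge w hadj h2))
    · rintro rfl
      exact ⟨Or.inr hadj, h2⟩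
  · rintro ⟨v, w, rfl, hv0, hN⟩ hdel
    obtain ⟨z, hadj, hz2⟩ := hdel v hv0
    rw [deleteEdges_adj] at hadj
    have hz : z ∈ insert v (G.neighborSet v) ∩ {u | r u = 2} := ⟨Or.inr hadj.1, hz2⟩
    rw [hN, Set.mem_singleton_iff] at hz
    exact hadj.2 (by rw [hz]; rfl)

end DeleteEdge

namespace VCritical

variable {V : Type*} [Fintype V] [DecidableEq V] {G : SimpleGraph V}

lemma romanNumberOn_add_one (hG : VCritical G) (x : V) :
    romanNumberOn G {u | u ≠ x} + 1 = romanNumber G := by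
  have hx := hG x
  rw [romanNumber_induce] at hx
  have := one_le_romanNumber G x
  omega

lemma romanNumber_deleteEdges (hG : VCritical G) (e : Sym2 V) :
    romanNumber (G.deleteEdges {e}) = romanNumber G := by
  induction e using Sym2.ind with
  | _ a b =>
  refine le_antisymm ?_ ?_
  · calc romanNumber (G.deleteEdges {s(a, b)})
        ≤ romanNumberOn (G.deleteEdges {s(a, b)}) {u | u ≠ a} + 1 :=
          romanNumber_le_romanNumberOn_add_one _ a
      _ = romanNumberOn G {u | u ≠ a} + 1 := by rw [romanNumberOn_deleteEdges (by simp)]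
      _ = romanNumber G := hG.romanNumberOn_add_one a
  · simpa only [romanNumberOn_univ] using romanNumberOn_anti (deleteEdges_le {s(a, b)}) Set.univ

lemma vCritical_deleteEdges_iff (hG : VCritical G) (e : Sym2 V) :
    VCritical (G.deleteEdges {e}) ↔
      ∀ x, romanNumberOn (G.deleteEdges {e}) {u | u ≠ x} + 1 = romanNumber G := by
  simp only [VCritical, romanNumber_induce, hG.romanNumber_deleteEdges]
  refine forall_congr' fun x => ?_
  have := one_le_romanNumber G x
  omega

lemma romanNumberOn_deleteEdges_add_one_eq_iff (hG : VCritical G) (e : Sym2 V) (x : V) :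
    romanNumberOn (G.deleteEdges {e}) {u | u ≠ x} + 1 = romanNumber G ↔
      ∃ r, IsRomanFn G r ∧ romanWeight r = romanNumber G ∧ r x = 1 ∧
        IsRomanFn (G.deleteEdges {e}) r := by
  rw [← hG.romanNumberOn_add_one x, add_left_inj,
    romanNumberOn_eq_iff (romanNumberOn_anti (deleteEdges_le _) _),
    ← exists_isRomanFn_apply_eq_one_iff]
  refine exists_congr fun r => ⟨fun ⟨hH, hw, hx⟩ => ⟨?_, hw, hx, hH⟩,
    fun ⟨_, hw, hx, hH⟩ => ⟨hH, hw, hx⟩⟩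
  exact isRomanFnOn_univ.1 ((isRomanFnOn_univ.2 hH).mono (deleteEdges_le {e}))

end VCritical

/-- a v-critical graph `G` is e-critical iff for every edge `e` there is a
vertex `v_e` such that for every minimal Roman partition with `v_e ∈ V_1`, the edge
`e = [v,w]` satisfies `v ∈ V_0` and `N[v] ∩ V_2 = {w}`. -/
theorem eCritical_iff_partition_condition {V : Type*} [Fintype V] [DecidableEq V]
    (G : SimpleGraph V) (hG : VCritical G) :
    ECritical G ↔ ∀ e ∈ G.edgeSet, ∃ ve : V,
      ∀ r : V → Fin 3, IsRomanFn G r → romanWeight r = romanNumber G → r ve = 1 →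
        ∃ v w : V, e = s(v, w) ∧ r v = 0 ∧
          (insert v (G.neighborSet v)) ∩ {u | r u = 2} = {w} := by
  constructor
  · rintro ⟨-, hdel⟩ e he
    obtain ⟨x, hx⟩ := not_forall.1 <| (hG.vCritical_deleteEdges_iff e).not.1 (hdel e he)
    refine ⟨x, fun r hr hw hx1 => (not_isRomanFn_deleteEdges_iff hr e).1 fun hH => ?_⟩
    exact hx ((hG.romanNumberOn_deleteEdges_add_one_eq_iff e x).2 ⟨r, hr, hw, hx1, hH⟩)
  · refine fun h => ⟨hG, fun e he hH => ?_⟩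
    obtain ⟨x, hx⟩ := h e he
    obtain ⟨r, hr, hw, hx1, hrH⟩ := (hG.romanNumberOn_deleteEdges_add_one_eq_iff e x).1
      ((hG.vCritical_deleteEdges_iff e).1 hH x)
    exact (not_isRomanFn_deleteEdges_iff hr e).2 (hx r hr hw hx1) hrH
end

section
/- Let G be a nonelementary finite simple graph with γ_R(G) = 4. Then G is v-critical if and only if for every x ∈ V(G) there exist two vertices a_x, b_x with a_x ≠ x ≠ b_x such that N[a_x] = V(G) \ {x, b_x}. -/
open SimpleGraph

open Finset

/-!
A Roman domination function of weight `w ≤ 3` that takes the value 0 somewhere puts 2 on a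
single vertex `a`, and `a` is adjacent to all but at most `w - 2` other vertices; conversely, a
vertex adjacent to all but `k` others gives weight `2 + k`. Since `γ_R(G - x) ≥ γ_R(G) - 1`
always, for `γ_R(G) = 4` criticality at `x` means `γ_R(G - x) ≤ 3`, i.e. some `a ≠ x` is adjacent
to every vertex except `x` and at most one further vertex `b`. Then `a ≠ b` and `a` is adjacent to
neither `x` nor `b`: otherwise `a` would miss at most one vertex of `G`, forcing `γ_R(G) ≤ 3`.
-/

section Roman

variable {V : Type*} [Fintype V] (G : SimpleGraph V)

variable {G}

theorem romanNumber_le_two_add_card {a : V} {s : Finset V}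
    (had : ∀ u, u ≠ a → u ∉ s → G.Adj a u) : romanNumber G ≤ 2 + #s := by
  classical
  let r : V → Fin 3 := fun u => if u = a then 2 else if u ∈ s then 1 else 0
  have hr : IsRomanFn G r := by
    intro u hu
    simp only [r] at hu
    split_ifs at hu with hua hus
    · exact absurd hu (by decide)
    · exact absurd hu (by decide)
    · exact ⟨a, (had u hua hus).symm, if_pos rfl⟩
  have hle : ∀ u, (r u : ℕ) ≤ (if u = a then 2 else 0) + (if u ∈ s then 1 else 0) := by
    intro u; simp only [r]; split_ifs <;> simp
  calc romanNumber G ≤ romanWeight r := romanNumber_le_romanWeight G hr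
    _ ≤ ∑ u, ((if u = a then 2 else 0) + (if u ∈ s then 1 else 0)) := sum_le_sum fun u _ => hle u
    _ = 2 + #s := by
      rw [sum_add_distrib, sum_ite_eq', sum_boole, filter_mem_eq_inter, univ_inter]; simp

theorem romanNumber_le_three_of_forall_adj {a c : V}
    (had : ∀ u, u ≠ a → u ≠ c → G.Adj a u) : romanNumber G ≤ 3 := by
  classical
  exact romanNumber_le_two_add_card (s := {c}) fun u hua huc => had u hua (by simpa using huc)

theorem exists_forall_adj_of_romanNumber_le_three (h3 : romanNumber G ≤ 3)
    (hcard : romanNumber G < Fintype.card V) :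
    ∃ a : V, ∃ s : Finset V, 2 + #s ≤ romanNumber G ∧ ∀ u, u ≠ a → u ∉ s → G.Adj a u := by
  classical
  obtain ⟨r, hr, hw⟩ := exists_romanWeight_eq_romanNumber G
  have hpos : ∀ u, r u ≠ 0 → 1 ≤ (r u : ℕ) := fun u h =>
    Fin.val_pos_iff.mpr (Fin.pos_iff_ne_zero.mpr h)
  obtain ⟨u₀, hu₀⟩ : ∃ u, r u = 0 := by
    by_contra! h
    have := card_nsmul_le_sum univ (fun u => (r u : ℕ)) 1 fun u _ => hpos u (h u)
    simp only [smul_eq_mul, mul_one, card_univ] at this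
    unfold romanWeight at hw
    omega
  obtain ⟨a, -, ha⟩ := hr u₀ hu₀
  set s := (univ.erase a).filter (r · ≠ 0)
  have hsum : romanWeight r = 2 + ∑ u ∈ s, (r u : ℕ) := by
    have hs : ∑ u ∈ s, (r u : ℕ) = ∑ u ∈ univ.erase a, (r u : ℕ) :=
      sum_filter_of_ne fun u _ hu h => hu (by simp [h])
    rw [hs, romanWeight, ← add_sum_erase _ _ (mem_univ a), ha]
    rfl
  have hcard_s : #s ≤ ∑ u ∈ s, (r u : ℕ) := by
    simpa using card_nsmul_le_sum s (fun u => (r u : ℕ)) 1 fun u hu => hpos u (mem_filter.mp hu).2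
  refine ⟨a, s, by omega, fun u hua hus => ?_⟩
  have hu : r u = 0 := by by_contra h; exact hus (by simp [s, hua, h])
  obtain ⟨v, huv, hv⟩ := hr u hu
  -- a second vertex of value 2 would already push the weight to 4
  have hva : v = a := by
    by_contra hva
    have hvs : v ∈ s := by simp [s, hva, hv]
    have := single_le_sum (f := fun u => (r u : ℕ)) (fun _ _ => Nat.zero_le _) hvs
    simp only [hv] at this
    omega
  exact hva ▸ huv.symm

end Roman

section Induce

variable {V : Type*} [Fintype V] [DecidableEq V] {G : SimpleGraph V}

theorem romanNumber_le_romanNumber_induce_ne_add_one (x : V) :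
    romanNumber G ≤ romanNumber (G.induce {u | u ≠ x}) + 1 := by
  obtain ⟨r', hr', hw'⟩ := exists_romanWeight_eq_romanNumber (G.induce {u | u ≠ x})
  let r : V → Fin 3 := fun u => if h : u = x then 1 else r' ⟨u, h⟩
  have hr : IsRomanFn G r := by
    intro u hu
    by_cases hux : u = x
    · simp [r, hux] at hu
    obtain ⟨v, huv, hv⟩ := hr' ⟨u, hux⟩ (by simpa [r, hux] using hu)
    exact ⟨v, huv, (dif_neg v.2).trans hv⟩
  calc romanNumber G ≤ romanWeight r := romanNumber_le_romanWeight G hr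
    _ = romanWeight r' + 1 := by
      rw [romanWeight, Fintype.sum_eq_add_sum_subtype_ne _ x, add_comm, romanWeight]
      congr 1
      · exact sum_congr rfl fun u _ => congrArg _ (dif_neg u.2)
      · simp [r]
    _ = _ := by rw [hw']

theorem romanNumber_induce_ne_le_three {a b x : V} (hax : a ≠ x) (hbx : b ≠ x)
    (had : ∀ u, u ≠ a → u ≠ x → u ≠ b → G.Adj a u) :
    romanNumber (G.induce {u | u ≠ x}) ≤ 3 :=
  romanNumber_le_three_of_forall_adj (a := ⟨a, hax⟩) (c := ⟨b, hbx⟩) fun u hua hub =>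
    had u (fun h => hua (Subtype.ext h)) u.2 (fun h => hub (Subtype.ext h))

theorem exists_forall_adj_of_romanNumber_induce_ne_eq_three (hcard : 4 < Fintype.card V) {x : V}
    (hx : romanNumber (G.induce {u | u ≠ x}) = 3) :
    ∃ a b, a ≠ x ∧ x ≠ b ∧ ∀ u, u ≠ a → u ≠ x → u ≠ b → G.Adj a u := by
  have hcardH : 3 < Fintype.card {u | u ≠ x} := by rw [Set.card_ne_eq]; omega
  obtain ⟨a, s, hs, had⟩ := exists_forall_adj_of_romanNumber_le_three hx.le (hx ▸ hcardH)
  have : Nonempty {u | u ≠ x} := ⟨a⟩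
  obtain ⟨b, hb⟩ := card_le_one_iff_subset_singleton.mp (show #s ≤ 1 by omega)
  refine ⟨a, b, a.2, fun h => b.2 h.symm, fun u hua hux hub => had ⟨u, hux⟩ ?_ fun h => hub ?_⟩
  · exact fun h => hua (congrArg Subtype.val h)
  · exact congrArg Subtype.val (mem_singleton.mp (hb h))

theorem insert_neighborSet_eq_diff_iff (h3 : 3 < romanNumber G) {a x b : V} (hax : a ≠ x) :
    insert a (G.neighborSet a) = Set.univ \ {x, b} ↔
      ∀ u, u ≠ a → u ≠ x → u ≠ b → G.Adj a u := by
  constructor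
  · intro h u hua hux hub
    have hu : u ∈ insert a (G.neighborSet a) := by rw [h]; simp [hux, hub]
    exact hu.resolve_left hua
  · intro had
    have key : ∀ c, ¬ ∀ u, u ≠ a → u ≠ c → G.Adj a u := fun c h =>
      (romanNumber_le_three_of_forall_adj h).not_gt h3
    have hab : a ≠ b := by
      rintro rfl
      exact key x fun u hua hux => had u hua hux hua
    have hnx : ¬ G.Adj a x := fun hx => key b fun u hua hub => by
      by_cases hux : u = x
      · exact hux ▸ hx
      · exact had u hua hux hub
    have hnb : ¬ G.Adj a b := fun hb => key x fun u hua hux => by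
      by_cases hub : u = b
      · exact hub ▸ hb
      · exact had u hua hux hub
    ext u
    simp only [Set.mem_insert_iff, mem_neighborSet, Set.mem_sdiff, Set.mem_univ, true_and,
      Set.mem_singleton_iff]
    rcases eq_or_ne u a with rfl | hua
    · simp [hax, hab]
    · simp only [hua, false_or, not_or]
      refine ⟨fun h => ⟨?_, ?_⟩, fun h => had u hua h.1 h.2⟩ <;> rintro rfl <;> contradiction

end Induce

/-- a nonelementary graph `G` with γ_R(G) = 4 is v-critical iff for every
vertex `x` there are vertices `a_x ≠ x ≠ b_x` with `N[a_x] = V(G) \ {x, b_x}`. -/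
theorem vCritical_iff_closed_nbhd_condition {V : Type*} [Fintype V] [DecidableEq V]
    (G : SimpleGraph V) (hne : romanNumber G < Fintype.card V) (h4 : romanNumber G = 4) :
    VCritical G ↔ ∀ x : V, ∃ a b : V, a ≠ x ∧ x ≠ b ∧
      insert a (G.neighborSet a) = Set.univ \ {x, b} := by
  have hcrit (x : V) : romanNumber (G.induce {u | u ≠ x}) = romanNumber G - 1 ↔
      ∃ a b, a ≠ x ∧ x ≠ b ∧ ∀ u, u ≠ a → u ≠ x → u ≠ b → G.Adj a u := by
    rw [h4]
    refine ⟨exists_forall_adj_of_romanNumber_induce_ne_eq_three (by omega), ?_⟩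
    rintro ⟨a, b, hax, hxb, had⟩
    have hlow := romanNumber_le_romanNumber_induce_ne_add_one (G := G) x
    have hup := romanNumber_induce_ne_le_three hax hxb.symm had
    omega
  refine forall_congr' fun x => (hcrit x).trans ?_
  refine exists_congr fun a => exists_congr fun b => and_congr_right fun hax => ?_
  exact and_congr_right fun _ => (insert_neighborSet_eq_diff_iff (by omega) hax).symm
end

section
/- If G is a nonelementary v-critical finite simple graph with γ_R(G) = 4 and v is a cut vertex of G, then one of the connected components of G \ {v} consists of a single vertex. -/
open SimpleGraph

/-!
Deleting `v` leaves a graph with Roman number `3` and at least two components. Under a Roman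
function every component with at least two vertices carries weight at least `2`, so if no
component were a single vertex the weight would be at least `4`.
-/

section

variable {V : Type*} [Fintype V] {G : SimpleGraph V} {r : V → Fin 3}

lemma exists_isRomanFn_romanWeight_eq_romanNumber (G : SimpleGraph V) :
    ∃ r : V → Fin 3, IsRomanFn G r ∧ romanWeight r = romanNumber G :=
  Nat.sInf_mem (s := {w | ∃ r : V → Fin 3, IsRomanFn G r ∧ romanWeight r = w})
    ⟨_, fun _ => 2, fun _ h => absurd h (by simp), rfl⟩

open Classical in
/-- A vertex of weight `0` needs a neighbour of weight `2`, which lies in its own component;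
so a component either contains a `2` or has no `0` at all. -/
lemma IsRomanFn.two_le_sum_supp (hr : IsRomanFn G r) {c : G.ConnectedComponent}
    (hc : 1 < c.supp.ncard) : 2 ≤ ∑ u ∈ c.supp.toFinset, (r u : ℕ) := by
  by_cases h2 : ∃ u ∈ c.supp, r u = 2
  · obtain ⟨u, hu, hru⟩ := h2
    calc 2 = (r u : ℕ) := by simp [hru]
      _ ≤ _ := Finset.single_le_sum (f := fun u => (r u : ℕ)) (fun _ _ => Nat.zero_le _)
          (Set.mem_toFinset.mpr hu)
  · push Not at h2
    have hpos : ∀ u ∈ c.supp.toFinset, 1 ≤ (r u : ℕ) := by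
      intro u hu
      by_contra h0
      obtain ⟨w, hadj, hw⟩ := hr u (Fin.ext (by omega))
      exact h2 w (c.mem_supp_of_adj_mem_supp (Set.mem_toFinset.mp hu) hadj) hw
    calc 2 ≤ c.supp.toFinset.card := by rwa [Set.ncard_eq_toFinset_card'] at hc
      _ = ∑ _u ∈ c.supp.toFinset, 1 := by simp
      _ ≤ _ := Finset.sum_le_sum hpos

lemma IsRomanFn.four_le_romanWeight (hr : IsRomanFn G r) {c c' : G.ConnectedComponent}
    (hcc' : c ≠ c') (hc : 1 < c.supp.ncard) (hc' : 1 < c'.supp.ncard) :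
    4 ≤ romanWeight r := by
  classical
  have hdisj : Disjoint c.supp.toFinset c'.supp.toFinset :=
    Set.disjoint_toFinset.mpr (G.pairwise_disjoint_supp_connectedComponent hcc')
  calc 4 ≤ ∑ u ∈ c.supp.toFinset, (r u : ℕ) + ∑ u ∈ c'.supp.toFinset, (r u : ℕ) :=
        add_le_add (hr.two_le_sum_supp hc) (hr.two_le_sum_supp hc')
    _ = ∑ u ∈ c.supp.toFinset ∪ c'.supp.toFinset, (r u : ℕ) := (Finset.sum_union hdisj).symm
    _ ≤ romanWeight r := Finset.sum_le_sum_of_subset (Finset.subset_univ _)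

lemma exists_ncard_supp_eq_one_of_romanNumber_lt_four (h : romanNumber G < 4)
    (hG : 1 < Nat.card G.ConnectedComponent) :
    ∃ c : G.ConnectedComponent, c.supp.ncard = 1 := by
  obtain ⟨r, hr, hw⟩ := exists_isRomanFn_romanWeight_eq_romanNumber G
  obtain ⟨c, c', hcc'⟩ := (Finite.one_lt_card_iff_nontrivial.mp hG).exists_pair_ne
  by_contra! hsing
  have hlt (d : G.ConnectedComponent) : 1 < d.supp.ncard :=
    lt_of_le_of_ne ((Set.ncard_pos (Set.toFinite _)).mpr d.nonempty_supp) (hsing d).symm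
  have := hr.four_le_romanWeight hcc' (hlt c) (hlt c')
  omega

lemma IsCutVertex.one_lt_card_connectedComponent_induce [DecidableEq V] {v : V}
    (hcut : IsCutVertex G v) :
    1 < Nat.card (G.induce {u | u ≠ v}).ConnectedComponent := by
  obtain ⟨⟨c⟩, -⟩ := Nat.card_pos_iff.mp (Nat.zero_lt_of_lt hcut)
  have : 0 < Nat.card G.ConnectedComponent :=
    Nat.card_pos_iff.mpr ⟨⟨G.connectedComponentMk c.out.1⟩, inferInstance⟩
  unfold IsCutVertex at hcut
  omega

end

theorem component_singleton_of_cutVertex_general {V : Type*} [Fintype V] [DecidableEq V]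
    (G : SimpleGraph V) (hv : VCritical G)
    (h4 : romanNumber G = 4) (v : V) (hcut : IsCutVertex G v) :
    ∃ c : (G.induce {u | u ≠ v}).ConnectedComponent, c.supp.ncard = 1 := by
  have hH : romanNumber (G.induce {u | u ≠ v}) = 3 := by rw [hv v, h4]
  exact exists_ncard_supp_eq_one_of_romanNumber_lt_four (by omega)
    hcut.one_lt_card_connectedComponent_induce

/-- if `G` is nonelementary v-critical with γ_R(G) = 4 and `v` is a cut
vertex, then some connected component of `G \ {v}` is a single vertex. -/
theorem component_singleton_of_cutVertex {V : Type*} [Fintype V] [DecidableEq V]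
    (G : SimpleGraph V) (hne : romanNumber G < Fintype.card V) (hv : VCritical G)
    (h4 : romanNumber G = 4) (v : V) (hcut : IsCutVertex G v) :
    ∃ c : (G.induce {u | u ≠ v}).ConnectedComponent, c.supp.ncard = 1 :=
  component_singleton_of_cutVertex_general G hv h4 v hcut
end
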